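/- arXiv:2112.13897 — 2 statements merged into one kernel-verified Lean document; each statement's English description precedes it below -/
import Mathlib

section
/- In the inverse system A_i = ℤ with bonding maps multiplication by 9, an element (a_i) of ∏_i ℤ lies in the image of Φ (where Φ((a_i)) = (a_i − 9·a_{i+1})) if and only if the associated 3-adic series Σ_{i≥0} 9^i a_i converges to an element of ℤ ⊆ ℤ̂₃, i.e., the partial sums s_n = Σ_{i=0}^{n} 9^i a_i are eventually congruent to a fixed integer modulo arbitrarily high powers of 3. -/
/-!
If `bᵢ − q·bᵢ₊₁ = aᵢ` then the partial sums telescope: `Σ_{i<n} qⁱ aᵢ = b₀ − qⁿ bₙ`, which tends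
to `b₀` in `ℤ_[p]` when `q = pᵏ`, `k ≥ 1`. Conversely, if the partial sums `sₙ` tend to an integer
`z`, then `z − sₙ` is a `p`-adic limit of the integers `sₘ − sₙ`, all divisible by `qⁿ`; the ideal
`qⁿ ℤ_[p]` is closed and meets `ℤ` in `qⁿ ℤ`, so `bₙ := (z − sₙ) / qⁿ` is an integer, and it solves
`bₙ − q·bₙ₊₁ = aₙ`.
-/

open Filter Topology Finset

theorem sum_range_pow_mul_of_sub_mul_eq {R : Type*} [CommRing R] {q : R} {a b : ℕ → R}
    (hb : ∀ i, b i - q * b (i + 1) = a i) (n : ℕ) :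
    ∑ i ∈ range n, q ^ i * a i = b 0 - q ^ n * b n := by
  simp_rw [← hb, mul_sub, ← mul_assoc, ← pow_succ]
  simpa using sum_range_sub' (fun i => q ^ i * b i) n

theorem pow_dvd_sum_Ico_pow_mul {R : Type*} [Semiring R] (q : R) (a : ℕ → R) (n m : ℕ) :
    q ^ n ∣ ∑ i ∈ Ico n m, q ^ i * a i :=
  dvd_sum fun _ hi => (pow_dvd_pow q (mem_Ico.1 hi).1).mul_right _

theorem exists_sub_mul_eq_of_pow_dvd {R : Type*} [CommRing R] [IsDomain R] {q z : R}
    (hq : q ≠ 0) {a : ℕ → R} (h : ∀ n, q ^ n ∣ z - ∑ i ∈ range n, q ^ i * a i) :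
    ∃ b : ℕ → R, ∀ i, b i - q * b (i + 1) = a i := by
  choose b hb using h
  refine ⟨b, fun n => mul_left_cancel₀ (pow_ne_zero n hq) ?_⟩
  have hsucc := hb (n + 1)
  rw [sum_range_succ, pow_succ] at hsucc
  linear_combination hsucc - hb n

namespace PadicInt

variable {p : ℕ} [Fact p.Prime]

theorem tendsto_pow_mul_nhds_zero {x : ℤ_[p]} (hx : ‖x‖ < 1) (y : ℕ → ℤ_[p]) :
    Tendsto (fun n => x ^ n * y n) atTop (𝓝 0) := by
  refine squeeze_zero_norm (fun n => ?_)
    (tendsto_pow_atTop_nhds_zero_of_lt_one (norm_nonneg x) hx)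
  rw [norm_mul, norm_pow]
  exact mul_le_of_le_one_right (by positivity) (norm_le_one _)

theorem pow_dvd_of_tendsto {x : ℕ → ℤ} {y : ℤ} {n : ℕ}
    (hx : Tendsto (fun m => (x m : ℤ_[p])) atTop (𝓝 y))
    (hdvd : ∀ᶠ m in atTop, (p : ℤ) ^ n ∣ x m) : (p : ℤ) ^ n ∣ y := by
  rw [← norm_int_le_pow_iff_dvd]
  exact le_of_tendsto hx.norm (hdvd.mono fun m hm => norm_int_le_pow_iff_dvd.2 hm)

theorem exists_sub_pow_mul_eq_iff_tendsto_intCast {k : ℕ} (hk : k ≠ 0) (a : ℕ → ℤ) :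
    (∃ b : ℕ → ℤ, ∀ i, b i - (p : ℤ) ^ k * b (i + 1) = a i) ↔
      ∃ z : ℤ, Tendsto (fun n => ∑ i ∈ range n, ((p : ℤ_[p]) ^ k) ^ i * (a i : ℤ_[p])) atTop
        (𝓝 (z : ℤ_[p])) := by
  have hp : p.Prime := Fact.out
  set s : ℕ → ℤ := fun n => ∑ i ∈ range n, ((p : ℤ) ^ k) ^ i * a i
  have hcast : ∀ n, ∑ i ∈ range n, ((p : ℤ_[p]) ^ k) ^ i * (a i : ℤ_[p]) = (s n : ℤ_[p]) := by
    intro n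
    push_cast [s]
    rfl
  simp_rw [hcast]
  constructor
  · rintro ⟨b, hb⟩
    have hq : ‖(p : ℤ_[p]) ^ k‖ < 1 := by
      rw [norm_pow, norm_p]
      exact pow_lt_one₀ (by positivity) (inv_lt_one_of_one_lt₀ (mod_cast hp.one_lt)) hk
    refine ⟨b 0, ?_⟩
    simp only [s, sum_range_pow_mul_of_sub_mul_eq hb]
    push_cast
    simpa using tendsto_const_nhds.sub (tendsto_pow_mul_nhds_zero hq (fun n => (b n : ℤ_[p])))
  · rintro ⟨z, hz⟩
    refine exists_sub_mul_eq_of_pow_dvd (z := z) (pow_ne_zero k (mod_cast hp.ne_zero)) fun n => ?_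
    rw [← pow_mul]
    refine pow_dvd_of_tendsto (x := fun m => s m - s n)
      (by simpa only [Int.cast_sub] using hz.sub_const (s n : ℤ_[p])) ?_
    filter_upwards [eventually_ge_atTop n] with m hm
    rw [pow_mul, ← sum_Ico_eq_sub _ hm]
    exact pow_dvd_sum_Ico_pow_mul _ _ n m

end PadicInt

/-- For the inverse system `Aᵢ = ℤ` with bonding maps multiplication by `9`, a sequence
`(aᵢ)` lies in the image of `Φ((bᵢ)) = (bᵢ − 9·bᵢ₊₁)` if and only if the `3`-adic series
`Σᵢ 9ⁱ aᵢ` converges in `ℤ̂₃` to an element of `ℤ ⊆ ℤ̂₃` (i.e. the partial sums are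
eventually congruent to a fixed integer modulo arbitrarily high powers of `3`). -/
theorem mem_range_Phi_iff_series_integral (a : ℕ → ℤ) :
    (∃ b : ℕ → ℤ, ∀ i, b i - 9 * b (i + 1) = a i) ↔
      ∃ z : ℤ, Tendsto
        (fun n => (∑ i ∈ Finset.range n, (9 : ℤ_[3]) ^ i * (a i : ℤ_[3]))) atTop
        (nhds (z : ℤ_[3])) := by
  have := PadicInt.exists_sub_pow_mul_eq_iff_tendsto_intCast (p := 3) (k := 2) two_ne_zero a
  norm_num at this
  exact this
end

section
/- The quotient group ℤ̂₃ / ℤ (3-adic integers modulo the integers) is an uncountable divisible abelian group; in particular it is nonzero. -/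
/-!
`ℤ_[3]` is uncountable (its fraction field `ℚ_[3]` is a complete nontrivially normed field, so
has the cardinality of the continuum), hence so is its quotient by the countable subgroup `ℤ`.
Divisibility: every nonzero ideal of `ℤ_[p]` is `(p ^ m)`, the kernel of `ℤ_[p] → ℤ/p^mℤ`, and
this map is onto already on `ℕ`; so for `n ≠ 0` every `x` is congruent modulo `n ℤ_[p]` to an
integer, i.e. `x ∈ n ℤ_[p] + ℤ`.
-/

theorem AddSubgroup.uncountable_quotient_of_countable {G : Type*} [AddGroup G] [Uncountable G]
    (H : AddSubgroup G) [Countable H] : Uncountable (G ⧸ H) := by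
  rw [← not_countable_iff]
  intro
  exact not_countable (α := G)
    (Countable.of_equiv _ (AddSubgroup.addGroupEquivQuotientProdAddSubgroup (s := H)).symm)

namespace PadicInt

variable {p : ℕ} [Fact p.Prime]

variable (p) in
theorem uncountable : Uncountable ℤ_[p] := by
  rw [← not_countable_iff]
  intro
  have hsurj : Function.Surjective fun xy : ℤ_[p] × ℤ_[p] ↦ (xy.1 : ℚ_[p]) / xy.2 := fun z ↦ by
    obtain ⟨x, y, -, hxy⟩ := IsFractionRing.div_surjective ℤ_[p] z
    exact ⟨(x, y), hxy⟩
  have : Countable ℚ_[p] := hsurj.countable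
  exact (Cardinal.aleph0_lt_mk_iff.mp <| Cardinal.aleph0_lt_continuum.trans_le
    (continuum_le_cardinal_of_nontriviallyNormedField ℚ_[p])).not_countable this

theorem exists_natCast_sub_mem_span_singleton (x : ℤ_[p]) {n : ℤ_[p]} (hn : n ≠ 0) :
    ∃ k : ℕ, x - k ∈ Ideal.span {n} := by
  obtain ⟨m, hm⟩ := ideal_eq_span_pow_p (Ideal.span_singleton_eq_bot.not.mpr hn)
  refine ⟨(toZModPow m x).val, ?_⟩
  rw [hm, ← ker_toZModPow, RingHom.mem_ker, map_sub, map_natCast, ZMod.natCast_zmod_val, sub_self]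

theorem exists_nsmul_eq_of_quotient_intCast (d : ℤ_[p] ⧸ (Int.castAddHom ℤ_[p]).range) {n : ℕ}
    (hn : 0 < n) : ∃ y, n • y = d := by
  obtain ⟨x, rfl⟩ := QuotientAddGroup.mk_surjective d
  obtain ⟨k, hk⟩ := exists_natCast_sub_mem_span_singleton x (n := n) (by exact_mod_cast hn.ne')
  obtain ⟨y, hy⟩ := Ideal.mem_span_singleton'.mp hk
  refine ⟨y, ?_⟩
  rw [← QuotientAddGroup.mk_nsmul, QuotientAddGroup.eq_iff_sub_mem, nsmul_eq_mul, mul_comm, hy]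
  exact ⟨-k, by simp⟩

end PadicInt

/-- The quotient group `ℤ̂₃/ℤ` of the `3`-adic integers by the (diagonally embedded) integers
is an uncountable divisible abelian group; in particular it is nonzero. -/
theorem padicInt_quotient_int_uncountable_divisible :
    ¬ Countable (ℤ_[3] ⧸ (AddMonoidHom.range (Int.castAddHom ℤ_[3]))) ∧
      (∀ (d : ℤ_[3] ⧸ (AddMonoidHom.range (Int.castAddHom ℤ_[3]))) (n : ℕ), 0 < n →
        ∃ x, n • x = d) ∧
      Nontrivial (ℤ_[3] ⧸ (AddMonoidHom.range (Int.castAddHom ℤ_[3]))) := by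
  have : Uncountable ℤ_[3] := PadicInt.uncountable 3
  have : Countable (Int.castAddHom ℤ_[3]).range := by
    rw [← SetLike.coe_sort_coe, AddMonoidHom.coe_range]
    exact (Set.countable_range _).to_subtype
  have : Uncountable (ℤ_[3] ⧸ (Int.castAddHom ℤ_[3]).range) :=
    AddSubgroup.uncountable_quotient_of_countable _
  exact ⟨not_countable, fun d _ hn ↦ PadicInt.exists_nsmul_eq_of_quotient_intCast d hn,
    inferInstance⟩
end
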